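/- Let Δ₂ be the convex hull of {(−2,0),(2,0),(0,1),(0,−1)} in ℝ², let k ≥ 1 be an integer, and let g : kΔ₂ → ℝ be a continuous concave function. Then Σ_{p ∈ kΔ₂ ∩ ℤ²} g(p) − ∫_{kΔ₂} g dA ≤ (1/2)·Σ_{p ∈ ∂(kΔ₂) ∩ ℤ²} g(p) − (1/6)·(g(0,k) + g(0,−k)) + (1/6)·(g(2k,0) + g(−2k,0)) + (1/3)·(g(k,0) + g(−k,0)) + (1/3)·g(0,0). -/

import Mathlib

open MeasureTheory Pointwise

noncomputable section

/-- The lattice points of `ℝ²`: points with integer coordinates. -/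
def lat : Set (ℝ × ℝ) := {x | ∃ m n : ℤ, x = ((m : ℝ), (n : ℝ))}

/-- The moment polytope of `X₂ = (ℙ¹×ℙ¹)/(ℤ/4ℤ)` polarized by `-2K`. -/
def Δ₂ : Set (ℝ × ℝ) := convexHull ℝ {((-2 : ℝ), (0 : ℝ)), (2, 0), (0, 1), (0, -1)}

/-!
`kΔ₂` is the diamond `|x| + 2|y| ≤ 2k`; triangulate each horizontal strip `n ≤ y ≤ n + 1` between
consecutive lattice rows by unimodular lattice triangles, arranged in four zigzags. On the slice
at height `n + t`, concavity puts `g` above the linear interpolation of its values along each edge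
of the triangulation, and the trapezoid rule for the concave slice function bounds the slice
integral from below by a quadratic polynomial in `t`. Integrating over `t`, every triangle
contributes its area `1/2` times the mean of `g` over its vertices, so
`∫ g ≥ (1/6) Σ_v n_v g(v)` with `n_v` the number of triangles at `v`; the weights of the
statement are `1 - n_v / 6`. The lower half of the diamond is the upper half for `g (x, -y)`.
-/

open Set Filter Topology

theorem integral_lerp_mul_lerp (α β γ δ : ℝ) :
    ∫ t in (0 : ℝ)..1, ((1 - t) * α + t * β) * ((1 - t) * γ + t * δ)
      = (2 * α * γ + α * δ + β * γ + 2 * β * δ) / 6 := by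
  have hpoly : ∀ t : ℝ, ((1 - t) * α + t * β) * ((1 - t) * γ + t * δ)
      = α * γ + (α * δ + β * γ - 2 * α * γ) * t + (α * γ - α * δ - β * γ + β * δ) * t ^ 2 := by
    intro t; ring
  simp_rw [hpoly]
  rw [intervalIntegral.integral_add, intervalIntegral.integral_add, intervalIntegral.integral_const,
    intervalIntegral.integral_const_mul, intervalIntegral.integral_const_mul, integral_id,
    integral_pow]
  · norm_num; ring
  all_goals exact Continuous.intervalIntegrable (by fun_prop) _ _

theorem ConcaveOn.trapezoid_le_integral {f : ℝ → ℝ} {a b : ℝ} (hab : a ≤ b)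
    (hf : ConcaveOn ℝ (Icc a b) f) (hc : ContinuousOn f (Icc a b)) :
    (b - a) * (f a + f b) / 2 ≤ ∫ x in a..b, f x := by
  have hmaps : MapsTo (fun θ : ℝ => a + (b - a) * θ) (Icc 0 1) (Icc a b) := fun θ hθ =>
    ⟨by nlinarith [hθ.1], by nlinarith [hθ.2]⟩
  have hchord : ∀ θ ∈ Icc (0 : ℝ) 1, (1 - θ) * f a + θ * f b ≤ f (a + (b - a) * θ) := by
    intro θ hθ
    have := hf.2 (left_mem_Icc.2 hab) (right_mem_Icc.2 hab) (sub_nonneg.2 hθ.2) hθ.1 (by ring)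
    simp only [smul_eq_mul] at this
    rwa [show (1 - θ) * a + θ * b = a + (b - a) * θ by ring] at this
  have hmono : ∫ θ in (0 : ℝ)..1, ((1 - θ) * f a + θ * f b)
      ≤ ∫ θ in (0 : ℝ)..1, f (a + (b - a) * θ) := intervalIntegral.integral_mono_on zero_le_one
    (Continuous.intervalIntegrable (μ := volume) (by fun_prop) _ _)
    ((hc.comp (by fun_prop) hmaps).intervalIntegrable_of_Icc zero_le_one) hchord
  have hchord_int : ∫ θ in (0 : ℝ)..1, ((1 - θ) * f a + θ * f b) = (f a + f b) / 2 := by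
    have := integral_lerp_mul_lerp 1 1 (f a) (f b)
    simp only [mul_one, sub_add_cancel, one_mul] at this
    linarith
  have hsub := intervalIntegral.smul_integral_comp_add_mul (a := 0) (b := 1) f (b - a) a
  simp only [mul_zero, add_zero, mul_one, add_sub_cancel, smul_eq_mul] at hsub
  rw [← hsub]
  nlinarith [sub_nonneg.2 hab]

theorem ConcaveOn.sum_trapezoid_le_integral {f : ℝ → ℝ} {x φ : ℕ → ℝ} {N : ℕ} (hx : Monotone x)
    (hf : ConcaveOn ℝ (Icc (x 0) (x N)) f) (hc : ContinuousOn f (Icc (x 0) (x N)))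
    (hφ : ∀ r ≤ N, φ r ≤ f (x r)) :
    ∑ r ∈ Finset.range N, (x (r + 1) - x r) * (φ r + φ (r + 1)) / 2 ≤ ∫ u in x 0..x N, f u := by
  have hsub : ∀ r < N, Icc (x r) (x (r + 1)) ⊆ Icc (x 0) (x N) := fun r hr =>
    Icc_subset_Icc (hx (Nat.zero_le r)) (hx hr)
  calc ∑ r ∈ Finset.range N, (x (r + 1) - x r) * (φ r + φ (r + 1)) / 2
      ≤ ∑ r ∈ Finset.range N, ∫ u in x r..x (r + 1), f u := by
        refine Finset.sum_le_sum fun r hr => ?_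
        have hr := Finset.mem_range.mp hr
        refine le_trans ?_ ((hf.subset (hsub r hr) (convex_Icc _ _)).trapezoid_le_integral
          (hx r.le_succ) (hc.mono (hsub r hr)))
        have := add_le_add (hφ r hr.le) (hφ (r + 1) hr)
        nlinarith [sub_nonneg.2 (hx r.le_succ)]
    _ = ∫ u in x 0..x N, f u := intervalIntegral.sum_integral_adjacent_intervals fun r hr =>
        ((hc.mono (hsub r hr)).intervalIntegrable_of_Icc (hx r.le_succ))

section

variable {S : Set (ℝ × ℝ)} {G : ℝ × ℝ → ℝ}

theorem Convex.mk_mem_of_mem_Icc (hS : Convex ℝ S) {u v x y : ℝ} (hu : (u, y) ∈ S)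
    (hv : (v, y) ∈ S) (hx : x ∈ Icc u v) : (x, y) ∈ S :=
  (Convex.ordConnected
    (hS.affine_preimage ((AffineMap.id ℝ ℝ).prod (AffineMap.const ℝ ℝ y)))).out hu hv hx

theorem Convex.lerp_mem (hS : Convex ℝ S) {u v y y' t : ℝ} (hu : (u, y) ∈ S)
    (hv : (v, y') ∈ S) (ht : t ∈ Icc (0 : ℝ) 1) :
    ((1 - t) * u + t * v, (1 - t) * y + t * y') ∈ S := by
  simpa using hS hu hv (sub_nonneg.2 ht.2) ht.1 (by ring)

theorem ConcaveOn.lerp_le (hG : ConcaveOn ℝ S G) {u v y y' t : ℝ} (hu : (u, y) ∈ S)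
    (hv : (v, y') ∈ S) (ht : t ∈ Icc (0 : ℝ) 1) :
    (1 - t) * G (u, y) + t * G (v, y') ≤ G ((1 - t) * u + t * v, (1 - t) * y + t * y') := by
  simpa using hG.2 hu hv (sub_nonneg.2 ht.2) ht.1 (by ring)

theorem ConcaveOn.horizontal (hG : ConcaveOn ℝ S G) (y : ℝ) :
    ConcaveOn ℝ {x | (x, y) ∈ S} fun x => G (x, y) :=
  hG.comp_affineMap ((AffineMap.id ℝ ℝ).prod (AffineMap.const ℝ ℝ y))

theorem ContinuousOn.horizontal (hc : ContinuousOn G S) (y : ℝ) :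
    ContinuousOn (fun x => G (x, y)) {x | (x, y) ∈ S} :=
  hc.comp (by fun_prop) fun _ hx => hx

theorem IntervalIntegrable.horizontal (hS : Convex ℝ S) (hc : ContinuousOn G S) {u v y : ℝ}
    (huv : u ≤ v) (hu : (u, y) ∈ S) (hv : (v, y) ∈ S) :
    IntervalIntegrable (fun x => G (x, y)) volume u v :=
  ((hc.horizontal y).mono fun _ hx => hS.mk_mem_of_mem_Icc hu hv hx).intervalIntegrable_of_Icc huv

end

namespace SubdivisionX2

variable {S : Set (ℝ × ℝ)} {G : ℝ × ℝ → ℝ}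

def rowSum (G : ℝ × ℝ → ℝ) (a b : ℤ) (y : ℝ) : ℝ := ∑ m ∈ Finset.Icc a b, G (m, y)

def pairSum (G : ℝ × ℝ → ℝ) (x y : ℝ) : ℝ := G (x, y) + G (-x, y)

def reflect (G : ℝ × ℝ → ℝ) : ℝ × ℝ → ℝ := fun p => G (p.1, -p.2)

theorem rowSum_self (G : ℝ × ℝ → ℝ) (a : ℤ) (y : ℝ) : rowSum G a a y = G (a, y) := by
  simp [rowSum]

theorem rowSum_succ (G : ℝ × ℝ → ℝ) {a b : ℤ} (h : a ≤ b + 1) (y : ℝ) :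
    rowSum G a (b + 1) y = rowSum G a b y + G (b + 1, y) := by
  rw [rowSum, rowSum, ← Finset.insert_Icc_right_eq_Icc_add_one h, Finset.sum_insert (by simp),
    add_comm]
  push_cast
  rfl

theorem rowSum_add_rowSum (G : ℝ × ℝ → ℝ) {a b c : ℤ} (hab : a ≤ b) (hbc : b ≤ c) (y : ℝ) :
    rowSum G a b y + rowSum G b c y = rowSum G a c y + G (b, y) := by
  obtain ⟨n, rfl⟩ : ∃ n : ℕ, c = b + n := ⟨(c - b).toNat, by omega⟩
  induction n with
  | zero => simp [rowSum_self, add_comm]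
  | succ n ih =>
    push_cast
    rw [← add_assoc, rowSum_succ G (by omega), rowSum_succ G (by omega), ← add_assoc,
      ih (by omega)]
    ring

/- The `r`-th rung of a zigzag joins `(a + ⌈r/2⌉, y)` to `(b + ⌊r/2⌋, y + 1)`; consecutive rungs
bound its `2m + 1` unimodular triangles, pointing alternately up and down. -/
def zigzagBot (a : ℤ) (r : ℕ) : ℤ := a + ((r + 1) / 2 : ℕ)

def zigzagTop (b : ℤ) (r : ℕ) : ℤ := b + (r / 2 : ℕ)

def rungX (a b : ℤ) (t : ℝ) (r : ℕ) : ℝ := (1 - t) * zigzagBot a r + t * zigzagTop b r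

def rungInterp (G : ℝ × ℝ → ℝ) (a b : ℤ) (y t : ℝ) (r : ℕ) : ℝ :=
  (1 - t) * G (zigzagBot a r, y) + t * G (zigzagTop b r, y + 1)

def rungTrapezoid (G : ℝ × ℝ → ℝ) (a b : ℤ) (y t : ℝ) (r : ℕ) : ℝ :=
  (rungX a b t (r + 1) - rungX a b t r)
    * (rungInterp G a b y t r + rungInterp G a b y t (r + 1)) / 2

def zigzagSum (G : ℝ × ℝ → ℝ) (a b : ℤ) (y : ℝ) (m : ℕ) (t : ℝ) : ℝ :=
  ∑ r ∈ Finset.range (2 * m + 1), rungTrapezoid G a b y t r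

theorem monotone_rungX (a b : ℤ) {t : ℝ} (ht : t ∈ Icc (0 : ℝ) 1) : Monotone (rungX a b t) :=
  fun r r' h => by
    have hbot : (zigzagBot a r : ℝ) ≤ zigzagBot a r' := by
      exact_mod_cast (by unfold zigzagBot; omega)
    have htop : (zigzagTop b r : ℝ) ≤ zigzagTop b r' := by
      exact_mod_cast (by unfold zigzagTop; omega)
    unfold rungX
    gcongr
    · exact sub_nonneg.2 ht.2
    · exact ht.1

theorem zigzagSum_le_integral (hS : Convex ℝ S) (hG : ConcaveOn ℝ S G) (hc : ContinuousOn G S)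
    {a b : ℤ} {m : ℕ} {y t : ℝ} (ha : ((a : ℝ), y) ∈ S) (ha' : ((a : ℝ) + m + 1, y) ∈ S)
    (hb : ((b : ℝ), y + 1) ∈ S) (hb' : ((b : ℝ) + m, y + 1) ∈ S) (ht : t ∈ Icc (0 : ℝ) 1) :
    zigzagSum G a b y m t ≤
      ∫ x in (1 - t) * a + t * b..(1 - t) * (a + m + 1) + t * (b + m), G (x, y + t) := by
  have hbot : ∀ r ≤ 2 * m + 1, ((zigzagBot a r : ℝ), y) ∈ S := fun r hr =>
    hS.mk_mem_of_mem_Icc ha ha' (by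
      constructor
      · exact_mod_cast (by unfold zigzagBot; omega)
      · have : zigzagBot a r ≤ a + m + 1 := by unfold zigzagBot; omega
        exact_mod_cast this)
  have htop : ∀ r ≤ 2 * m + 1, ((zigzagTop b r : ℝ), y + 1) ∈ S := fun r hr =>
    hS.mk_mem_of_mem_Icc hb hb' (by
      constructor
      · exact_mod_cast (by unfold zigzagTop; omega)
      · have : zigzagTop b r ≤ b + m := by unfold zigzagTop; omega
        exact_mod_cast this)
  have hy : (1 - t) * y + t * (y + 1) = y + t := by ring
  have hend : ∀ r ≤ 2 * m + 1, (rungX a b t r, y + t) ∈ S := fun r hr => by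
    unfold rungX
    simpa only [hy] using hS.lerp_mem (hbot r hr) (htop r hr) ht
  have hsub : Icc (rungX a b t 0) (rungX a b t (2 * m + 1)) ⊆ {x | (x, y + t) ∈ S} :=
    fun x hx => hS.mk_mem_of_mem_Icc (hend 0 (Nat.zero_le _)) (hend _ le_rfl) hx
  have key := ConcaveOn.sum_trapezoid_le_integral (f := fun x => G (x, y + t))
    (φ := rungInterp G a b y t) (monotone_rungX a b ht)
    ((hG.horizontal _).subset hsub (convex_Icc _ _)) ((hc.horizontal _).mono hsub)
    (fun r hr => by simpa only [hy, rungInterp, rungX] using hG.lerp_le (hbot r hr) (htop r hr) ht)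
  have h0 : rungX a b t 0 = (1 - t) * a + t * b := by simp [rungX, zigzagBot, zigzagTop]
  have hN : rungX a b t (2 * m + 1) = (1 - t) * (a + m + 1) + t * (b + m) := by
    simp only [rungX, zigzagBot, zigzagTop, show (2 * m + 1 + 1) / 2 = m + 1 by omega,
      show (2 * m + 1) / 2 = m by omega]
    push_cast
    ring
  rwa [h0, hN] at key

theorem integral_rungTrapezoid_even (G : ℝ × ℝ → ℝ) (a b : ℤ) (y : ℝ) (i : ℕ) :
    ∫ t in (0 : ℝ)..1, rungTrapezoid G a b y t (2 * i)
      = (G (a + i, y) + G (a + i + 1, y) + G (b + i, y + 1)) / 6 := by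
  have h : ∀ t, rungTrapezoid G a b y t (2 * i) = ((1 - t) * 1 + t * 0)
      * ((1 - t) * (G (a + i, y) + G (a + i + 1, y)) + t * (2 * G (b + i, y + 1))) / 2 := by
    intro t
    simp only [rungTrapezoid, rungX, rungInterp, zigzagBot, zigzagTop,
      show (2 * i + 1) / 2 = i by omega, show 2 * i / 2 = i by omega,
      show (2 * i + 1 + 1) / 2 = i + 1 by omega]
    push_cast
    ring_nf
  simp_rw [h, intervalIntegral.integral_div, integral_lerp_mul_lerp]
  ring

theorem integral_rungTrapezoid_odd (G : ℝ × ℝ → ℝ) (a b : ℤ) (y : ℝ) (i : ℕ) :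
    ∫ t in (0 : ℝ)..1, rungTrapezoid G a b y t (2 * i + 1)
      = (G (a + i + 1, y) + G (b + i, y + 1) + G (b + i + 1, y + 1)) / 6 := by
  have h : ∀ t, rungTrapezoid G a b y t (2 * i + 1) = ((1 - t) * 0 + t * 1)
      * ((1 - t) * (2 * G (a + i + 1, y)) + t * (G (b + i, y + 1) + G (b + i + 1, y + 1))) / 2 := by
    intro t
    simp only [rungTrapezoid, rungX, rungInterp, zigzagBot, zigzagTop,
      show (2 * i + 1 + 1) / 2 = i + 1 by omega, show (2 * i + 1) / 2 = i by omega,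
      show (2 * i + 1 + 1 + 1) / 2 = i + 1 by omega]
    push_cast
    ring_nf
  simp_rw [h, intervalIntegral.integral_div, integral_lerp_mul_lerp]
  ring

theorem continuous_rungTrapezoid (G : ℝ × ℝ → ℝ) (a b : ℤ) (y : ℝ) (r : ℕ) :
    Continuous fun t => rungTrapezoid G a b y t r := by
  unfold rungTrapezoid rungX rungInterp
  fun_prop

theorem continuous_zigzagSum (G : ℝ × ℝ → ℝ) (a b : ℤ) (y : ℝ) (m : ℕ) :
    Continuous (zigzagSum G a b y m) :=
  continuous_finsetSum _ fun r _ => continuous_rungTrapezoid G a b y r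

theorem integral_zigzagSum (G : ℝ × ℝ → ℝ) (a b : ℤ) (y : ℝ) (m : ℕ) :
    ∫ t in (0 : ℝ)..1, zigzagSum G a b y m t
      = (3 * rowSum G a (a + m + 1) y - 2 * G (a, y) - 2 * G (a + m + 1, y)
        + 3 * rowSum G b (b + m) (y + 1) - G (b, y + 1) - G (b + m, y + 1)) / 6 := by
  unfold zigzagSum
  rw [intervalIntegral.integral_finsetSum fun r _ =>
    (continuous_rungTrapezoid G a b y r).intervalIntegrable 0 1]
  induction m with
  | zero =>
    have := integral_rungTrapezoid_even G a b y 0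
    simp only [mul_zero, Nat.cast_zero, add_zero] at this
    simp only [zero_add, Finset.sum_range_one, this, mul_zero, Nat.cast_zero, add_zero,
      rowSum_succ G (le_add_of_nonneg_right zero_le_one), rowSum_self]
    ring
  | succ m ih =>
    have hbot : rowSum G a (a + (m + 1 : ℕ) + 1) y
        = rowSum G a (a + m + 1) y + G (a + m + 2, y) := by
      rw [show a + ((m + 1 : ℕ) : ℤ) + 1 = a + m + 1 + 1 by push_cast; ring,
        rowSum_succ G (by omega)]
      push_cast; ring_nf
    have htop : rowSum G b (b + (m + 1 : ℕ)) (y + 1)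
        = rowSum G b (b + m) (y + 1) + G (b + m + 1, y + 1) := by
      rw [show b + ((m + 1 : ℕ) : ℤ) = b + m + 1 by push_cast; ring, rowSum_succ G (by omega)]
      push_cast; ring_nf
    rw [show 2 * (m + 1) + 1 = 2 * m + 1 + 1 + 1 by ring, Finset.sum_range_succ,
      Finset.sum_range_succ, ih, integral_rungTrapezoid_odd,
      show 2 * m + 1 + 1 = 2 * (m + 1) by ring, integral_rungTrapezoid_even, hbot, htop]
    push_cast
    ring_nf

/- The strip between the rows of half-widths `2m + 2` (height `y`) and `2m` (height `y + 1`),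
cut into four zigzags at `-(m + 1)`, `0`, `m + 1` on the bottom row. -/
def stripSum (G : ℝ × ℝ → ℝ) (m : ℕ) (y t : ℝ) : ℝ :=
  zigzagSum G (-(2 * m + 2)) (-(2 * m)) y m t + zigzagSum G (-(m + 1)) (-m) y m t
    + zigzagSum G 0 0 y m t + zigzagSum G (m + 1) m y m t

theorem mk_mem_of_strip (hS : Convex ℝ S) {m : ℕ} {y t : ℝ}
    (hbot : ∀ x ∈ Icc (-(2 * m + 2 : ℝ)) (2 * m + 2), (x, y) ∈ S)
    (htop : ∀ x ∈ Icc (-(2 * m : ℝ)) (2 * m), (x, y + 1) ∈ S) (ht : t ∈ Icc (0 : ℝ) 1) :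
    ∀ x ∈ Icc (-(2 * m + 2 - 2 * t : ℝ)) (2 * m + 2 - 2 * t), (x, y + t) ∈ S := by
  have hm : (0 : ℝ) ≤ m := m.cast_nonneg
  have hy : (1 - t) * y + t * (y + 1) = y + t := by ring
  have hl := hS.lerp_mem (hbot _ ⟨le_rfl, by linarith⟩) (htop _ ⟨le_rfl, by linarith⟩) ht
  have hr := hS.lerp_mem (hbot _ ⟨by linarith, le_rfl⟩) (htop _ ⟨by linarith, le_rfl⟩) ht
  rw [hy] at hl hr
  exact fun x hx => hS.mk_mem_of_mem_Icc (by convert hl using 2; ring)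
    (by convert hr using 2; ring) hx

theorem stripSum_le_integral (hS : Convex ℝ S) (hG : ConcaveOn ℝ S G) (hc : ContinuousOn G S)
    {m : ℕ} {y t : ℝ} (hbot : ∀ x ∈ Icc (-(2 * m + 2 : ℝ)) (2 * m + 2), (x, y) ∈ S)
    (htop : ∀ x ∈ Icc (-(2 * m : ℝ)) (2 * m), (x, y + 1) ∈ S) (ht : t ∈ Icc (0 : ℝ) 1) :
    stripSum G m y t ≤ ∫ x in -(2 * m + 2 - 2 * t)..2 * m + 2 - 2 * t, G (x, y + t) := by
  obtain ⟨ht0, ht1⟩ := ht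
  have hm : (0 : ℝ) ≤ m := m.cast_nonneg
  have hslice := mk_mem_of_strip hS hbot htop ⟨ht0, ht1⟩
  have hint : ∀ u v : ℝ, -(2 * m + 2 - 2 * t) ≤ u → u ≤ v → v ≤ 2 * m + 2 - 2 * t →
      IntervalIntegrable (fun x => G (x, y + t)) volume u v := fun u v hu huv hv =>
    IntervalIntegrable.horizontal hS hc huv (hslice u ⟨hu, by linarith⟩)
      (hslice v ⟨by linarith, hv⟩)
  have zig : ∀ (a b : ℤ) (l r : ℝ), (1 - t) * a + t * b = l ∧
      (1 - t) * (a + m + 1) + t * (b + m) = r ∧ -(2 * m + 2 : ℝ) ≤ a ∧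
      (a : ℝ) + m + 1 ≤ 2 * m + 2 ∧ -(2 * m : ℝ) ≤ b ∧ (b : ℝ) + m ≤ 2 * m →
      zigzagSum G a b y m t ≤ ∫ x in l..r, G (x, y + t) := by
    rintro a b l r ⟨rfl, rfl, ha, ha', hb, hb'⟩
    exact zigzagSum_le_integral hS hG hc (hbot _ ⟨ha, by linarith⟩) (hbot _ ⟨by linarith, ha'⟩)
      (htop _ ⟨hb, by linarith⟩) (htop _ ⟨by linarith, hb'⟩) ⟨ht0, ht1⟩
  have z1 := zig (-(2 * m + 2)) (-(2 * m)) (-(2 * m + 2 - 2 * t)) (-(m + 1 - t))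
    (by push_cast; refine ⟨by ring, by ring, ?_, ?_, ?_, ?_⟩ <;> linarith)
  have z2 := zig (-(m + 1)) (-m) (-(m + 1 - t)) 0
    (by push_cast; refine ⟨by ring, by ring, ?_, ?_, ?_, ?_⟩ <;> linarith)
  have z3 := zig 0 0 0 (m + 1 - t)
    (by push_cast; refine ⟨by ring, by ring, ?_, ?_, ?_, ?_⟩ <;> linarith)
  have z4 := zig (m + 1) m (m + 1 - t) (2 * m + 2 - 2 * t)
    (by push_cast; refine ⟨by ring, by ring, ?_, ?_, ?_, ?_⟩ <;> linarith)
  rw [← intervalIntegral.integral_add_adjacent_intervals (b := -(m + 1 - t))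
      (hint _ _ le_rfl (by linarith) (by linarith)) (hint _ _ (by linarith) (by linarith) le_rfl),
    ← intervalIntegral.integral_add_adjacent_intervals (b := 0)
      (hint _ _ (by linarith) (by linarith) (by linarith))
      (hint _ _ (by linarith) (by linarith) le_rfl),
    ← intervalIntegral.integral_add_adjacent_intervals (b := m + 1 - t)
      (hint _ _ (by linarith) (by linarith) (by linarith))
      (hint _ _ (by linarith) (by linarith) le_rfl)]
  unfold stripSum
  linarith

theorem integral_stripSum (G : ℝ × ℝ → ℝ) (m : ℕ) (y : ℝ) :
    ∫ t in (0 : ℝ)..1, stripSum G m y t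
      = (3 * rowSum G (-(2 * m + 2)) (2 * m + 2) y + 3 * rowSum G (-(2 * m)) (2 * m) (y + 1)
        - 2 * pairSum G (2 * m + 2) y - pairSum G (m + 1) y - G (0, y)
        - pairSum G (2 * m) (y + 1) + pairSum G m (y + 1) + G (0, y + 1)) / 6 := by
  have hi : ∀ a b : ℤ, IntervalIntegrable (zigzagSum G a b y m) volume 0 1 := fun a b =>
    (continuous_zigzagSum G a b y m).intervalIntegrable 0 1
  unfold stripSum
  rw [intervalIntegral.integral_add ((hi _ _).add (hi _ _) |>.add (hi _ _)) (hi _ _),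
    intervalIntegral.integral_add ((hi _ _).add (hi _ _)) (hi _ _),
    intervalIntegral.integral_add (hi _ _) (hi _ _), integral_zigzagSum, integral_zigzagSum,
    integral_zigzagSum, integral_zigzagSum,
    show -(2 * (m : ℤ) + 2) + m + 1 = -(m + 1) by ring, show -((m : ℤ) + 1) + m + 1 = 0 by ring,
    show (0 : ℤ) + m + 1 = m + 1 by ring, show (m : ℤ) + 1 + m + 1 = 2 * m + 2 by ring,
    show -(2 * (m : ℤ)) + m = -m by ring, show -(m : ℤ) + m = 0 by ring,
    show (0 : ℤ) + m = m by ring, show (m : ℤ) + m = 2 * m by ring]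
  have hm : (0 : ℤ) ≤ m := m.cast_nonneg
  have hB1 := rowSum_add_rowSum G (a := -(2 * m + 2)) (b := -(m + 1)) (c := 0) (by omega)
    (by omega) y
  have hB2 := rowSum_add_rowSum G (a := -(2 * m + 2)) (b := 0) (c := m + 1) (by omega) (by omega) y
  have hB3 := rowSum_add_rowSum G (a := -(2 * m + 2)) (b := m + 1) (c := 2 * m + 2) (by omega)
    (by omega) y
  have hT1 := rowSum_add_rowSum G (a := -(2 * m)) (b := -m) (c := 0) (by omega) (by omega) (y + 1)
  have hT2 := rowSum_add_rowSum G (a := -(2 * m)) (b := 0) (c := m) (by omega) (by omega) (y + 1)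
  have hT3 := rowSum_add_rowSum G (a := -(2 * m)) (b := m) (c := 2 * m) (by omega) (by omega)
    (y + 1)
  simp only [pairSum]
  push_cast at *
  ring_nf at *
  linarith

theorem integral_stripSum_le (hS : Convex ℝ S) (hG : ConcaveOn ℝ S G) (hc : ContinuousOn G S)
    {m : ℕ} {y : ℝ} (hbot : ∀ x ∈ Icc (-(2 * m + 2 : ℝ)) (2 * m + 2), (x, y) ∈ S)
    (htop : ∀ x ∈ Icc (-(2 * m : ℝ)) (2 * m), (x, y + 1) ∈ S) {F : ℝ → ℝ}
    (hF : IntervalIntegrable F volume y (y + 1))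
    (hGF : ∀ t ∈ Icc (0 : ℝ) 1,
      ∫ x in -(2 * m + 2 - 2 * t)..2 * m + 2 - 2 * t, G (x, y + t) ≤ F (y + t)) :
    ∫ t in (0 : ℝ)..1, stripSum G m y t ≤ ∫ z in y..y + 1, F z := by
  have hcont : Continuous (stripSum G m y) := by
    have hz := continuous_zigzagSum G (y := y) (m := m)
    unfold stripSum
    exact (((hz _ _).add (hz _ _)).add (hz _ _)).add (hz _ _)
  have hmono : ∫ z in y..y + 1, stripSum G m y (z - y) ≤ ∫ z in y..y + 1, F z :=
    intervalIntegral.integral_mono_on (by linarith : y ≤ y + 1)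
    ((hcont.comp (continuous_sub_right y)).intervalIntegrable _ _) hF fun z hz => by
      have ht : z - y ∈ Icc (0 : ℝ) 1 := ⟨by linarith [hz.1], by linarith [hz.2]⟩
      simpa using (stripSum_le_integral hS hG hc hbot htop ht).trans (hGF _ ht)
  rwa [intervalIntegral.integral_comp_sub_right (fun t => stripSum G m y t), sub_self,
    add_sub_cancel_left] at hmono

def diamond (K : ℝ) : Set (ℝ × ℝ) := {p | |p.1| + 2 * |p.2| ≤ 2 * K}

theorem mem_diamond {K : ℝ} {p : ℝ × ℝ} : p ∈ diamond K ↔ |p.1| + 2 * |p.2| ≤ 2 * K := Iff.rfl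

theorem isClosed_diamond (K : ℝ) : IsClosed (diamond K) :=
  isClosed_le (by fun_prop) continuous_const

theorem convex_diamond (K : ℝ) : Convex ℝ (diamond K) := by
  intro p hp q hq a b ha hb hab
  simp only [mem_diamond, Prod.fst_add, Prod.snd_add, Prod.smul_fst, Prod.smul_snd,
    smul_eq_mul] at *
  have h1 := abs_add_le (a * p.1) (b * q.1)
  have h2 := abs_add_le (a * p.2) (b * q.2)
  simp only [abs_mul, abs_of_nonneg ha, abs_of_nonneg hb] at h1 h2
  have hK : a * (2 * K) + b * (2 * K) = 2 * K := by rw [← add_mul, hab, one_mul]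
  nlinarith [mul_le_mul_of_nonneg_left hp ha, mul_le_mul_of_nonneg_left hq hb]

theorem isCompact_diamond (K : ℝ) : IsCompact (diamond K) := by
  refine ((isCompact_Icc (a := -(2 * K)) (b := 2 * K)).prod
    (isCompact_Icc (a := -K) (b := K))).of_isClosed_subset
    (isClosed_diamond K) fun p hp => ?_
  rw [mem_diamond] at hp
  have := abs_nonneg p.1
  have := abs_nonneg p.2
  exact ⟨abs_le.mp (by linarith), abs_le.mp (by linarith)⟩

theorem reflect_mem_diamond {K : ℝ} {p : ℝ × ℝ} : (p.1, -p.2) ∈ diamond K ↔ p ∈ diamond K := by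
  simp [mem_diamond]

theorem continuousOn_reflect {K : ℝ} (hc : ContinuousOn G (diamond K)) :
    ContinuousOn (reflect G) (diamond K) :=
  hc.comp (by fun_prop) fun _ hp => reflect_mem_diamond.mpr hp

theorem concaveOn_reflect {K : ℝ} (hG : ConcaveOn ℝ (diamond K) G) :
    ConcaveOn ℝ (diamond K) (reflect G) := by
  have h := hG.comp_linearMap ((LinearMap.id : ℝ →ₗ[ℝ] ℝ).prodMap (-LinearMap.id))
  rwa [show ((LinearMap.id : ℝ →ₗ[ℝ] ℝ).prodMap (-LinearMap.id)) ⁻¹' diamond K = diamond K by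
    ext p; simp [mem_diamond]] at h

theorem Δ₂_eq_diamond_one : Δ₂ = diamond 1 := by
  refine (convexHull_min ?_ (convex_diamond 1)).antisymm fun p hp => ?_
  · rintro _ (rfl | rfl | rfl | rfl) <;> norm_num [mem_diamond]
  rw [mem_diamond] at hp
  set r := 1 - |p.1| / 2 - |p.2|
  have hr : 0 ≤ r := by simp only [r]; linarith
  let w : Fin 4 → ℝ := ![p.1⁺ / 2 + r / 2, p.1⁻ / 2 + r / 2, p.2⁺, p.2⁻]
  let z : Fin 4 → ℝ × ℝ := ![(2, 0), (-2, 0), (0, 1), (0, -1)]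
  have hp : p = ∑ i, w i • z i := by
    simp only [Fin.sum_univ_four, w, z]
    ext <;> simp only [Fin.isValue, Matrix.cons_val_zero, Matrix.cons_val_one, Matrix.cons_val,
      Prod.smul_mk, smul_eq_mul, Prod.mk_add_mk, mul_zero, mul_one, mul_neg, add_zero, zero_add]
      <;> linarith [posPart_sub_negPart p.1, posPart_sub_negPart p.2]
  rw [hp]
  refine (convex_convexHull ℝ _).sum_mem (fun i _ => ?_) ?_ fun i _ => subset_convexHull ℝ _ ?_
  · fin_cases i <;> simp only [w, Fin.zero_eta, Fin.mk_one, Fin.reduceFinMk, Fin.isValue,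
      Matrix.cons_val_zero, Matrix.cons_val_one, Matrix.cons_val] <;> positivity
  · simp only [Fin.sum_univ_four, w, r, Fin.isValue, Matrix.cons_val_zero, Matrix.cons_val_one,
      Matrix.cons_val]
    linarith [posPart_add_negPart p.1, posPart_add_negPart p.2]
  · fin_cases i <;> simp [z]

theorem smul_diamond_one {K : ℝ} (hK : 0 < K) : K • diamond 1 = diamond K := by
  ext p
  rw [mem_smul_set_iff_inv_smul_mem₀ hK.ne', mem_diamond, mem_diamond]
  simp only [Prod.smul_fst, Prod.smul_snd, smul_eq_mul, abs_mul, abs_inv, abs_of_pos hK]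
  rw [mul_left_comm, ← mul_add, inv_mul_le_iff₀ hK]
  ring_nf

theorem smul_Δ₂ {K : ℝ} (hK : 0 < K) : K • Δ₂ = diamond K := by
  rw [Δ₂_eq_diamond_one, smul_diamond_one hK]

theorem frontier_diamond {K : ℝ} (hK : 0 < K) :
    frontier (diamond K) = {p | |p.1| + 2 * |p.2| = 2 * K} := by
  refine (frontier_le_subset_eq (by fun_prop) continuous_const).antisymm fun p hp => ?_
  rw [frontier_eq_closure_inter_closure]
  refine ⟨subset_closure (le_of_eq hp),
    mem_closure_of_tendsto (f := fun n : ℕ => (1 + 1 / ((n : ℝ) + 1)) • p) (b := atTop)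
    ?_ (Eventually.of_forall fun n => ?_)⟩
  · have h : Tendsto (fun n : ℕ => (1 + 1 / ((n : ℝ) + 1)) • p) atTop (𝓝 ((1 + 0 : ℝ) • p)) :=
      (tendsto_const_nhds.add tendsto_one_div_add_atTop_nhds_zero_nat).smul_const p
    simpa using h
  · have hc : (0 : ℝ) < 1 / ((n : ℝ) + 1) := by positivity
    change ¬ (|((1 + 1 / ((n : ℝ) + 1)) • p).1| + 2 * |((1 + 1 / ((n : ℝ) + 1)) • p).2| ≤ 2 * K)
    replace hp : |p.1| + 2 * |p.2| = 2 * K := hp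
    simp only [Prod.smul_fst, Prod.smul_snd, smul_eq_mul, abs_mul, abs_of_pos (by positivity :
      (0 : ℝ) < 1 + 1 / ((n : ℝ) + 1))]
    nlinarith

theorem finsum_mem_inter_lat_eq_sum_rows {s : Finset ℤ} {row : ℤ → Finset ℤ}
    (hS : ∀ m n : ℤ, ((m : ℝ), (n : ℝ)) ∈ S ↔ n ∈ s ∧ m ∈ row n) (f : ℝ × ℝ → ℝ) :
    ∑ᶠ p ∈ S ∩ lat, f p = ∑ n ∈ s, ∑ m ∈ row n, f (m, n) := by
  set c : ℤ × ℤ → ℝ × ℝ := fun z => ((z.1 : ℝ), (z.2 : ℝ))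
  have hc : S ∩ lat = c '' ↑(s.biUnion fun n => row n ×ˢ {n}) := by
    ext p
    simp only [mem_inter_iff, Finset.coe_biUnion, Finset.coe_product, Finset.coe_singleton,
      mem_image, mem_iUnion, mem_prod, mem_singleton_iff, Finset.mem_coe]
    constructor
    · rintro ⟨hp, m, n, rfl⟩
      exact ⟨(m, n), ⟨n, ((hS m n).mp hp).1, ((hS m n).mp hp).2, rfl⟩, rfl⟩
    · rintro ⟨⟨m, n⟩, ⟨n', hn', hm, hn⟩, rfl⟩
      subst hn
      exact ⟨(hS m _).mpr ⟨hn', hm⟩, m, _, rfl⟩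
  rw [hc, finsum_mem_image, finsum_mem_coe_finset, Finset.sum_biUnion]
  · simp [c]
  · intro n _ n' _ hne
    simp only [Function.onFun, Finset.disjoint_left, Finset.mem_product, Finset.mem_singleton]
    exact fun z hz hz' => hne (hz.2.symm.trans hz'.2)
  · rintro ⟨a, b⟩ - ⟨a', b'⟩ - h
    simp_all [c]

theorem sum_Icc_neg_self (f : ℤ → ℝ) (k : ℕ) :
    ∑ n ∈ Finset.Icc (-(k : ℤ)) k, f n
      = ∑ n ∈ Finset.range (k + 1), f n + ∑ n ∈ Finset.range (k + 1), f (-n) - f 0 := by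
  induction k with
  | zero => simp
  | succ k ih =>
    have hIcc : Finset.Icc (-((k + 1 : ℕ) : ℤ)) (k + 1 : ℕ)
        = insert (-((k : ℤ) + 1)) (insert ((k : ℤ) + 1) (Finset.Icc (-(k : ℤ)) k)) := by
      ext m
      simp only [Finset.mem_Icc, Finset.mem_insert]
      omega
    rw [hIcc, Finset.sum_insert (by simp only [Finset.mem_insert, Finset.mem_Icc]; omega),
      Finset.sum_insert (by simp), ih, Finset.sum_range_succ _ (k + 1),
      Finset.sum_range_succ (fun n : ℕ => f (-n)) (k + 1)]
    push_cast
    ring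

theorem intCast_mem_diamond_iff (k : ℕ) (m n : ℤ) :
    ((m : ℝ), (n : ℝ)) ∈ diamond k ↔
      n ∈ Finset.Icc (-(k : ℤ)) k ∧ m ∈ Finset.Icc (-(2 * (k - |n|))) (2 * (k - |n|)) := by
  rw [mem_diamond, ← Int.cast_abs, ← Int.cast_abs]
  norm_cast
  simp only [Finset.mem_Icc, Int.abs_eq_natAbs]
  omega

theorem intCast_mem_frontier_diamond_iff {k : ℕ} (hk : 0 < k) (m n : ℤ) :
    ((m : ℝ), (n : ℝ)) ∈ frontier (diamond k) ↔
      n ∈ Finset.Icc (-(k : ℤ)) k ∧ m ∈ ({-(2 * (k - |n|)), 2 * (k - |n|)} : Finset ℤ) := by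
  rw [frontier_diamond (by exact_mod_cast hk), mem_ofPred_eq, ← Int.cast_abs, ← Int.cast_abs]
  norm_cast
  simp only [Finset.mem_Icc, Finset.mem_insert, Finset.mem_singleton, Int.abs_eq_natAbs]
  omega

def diamondRow (k : ℕ) (G : ℝ × ℝ → ℝ) (n : ℕ) : ℝ :=
  rowSum G (-(2 * ((k : ℤ) - n))) (2 * ((k : ℤ) - n)) n

theorem finsum_diamond_inter_lat (k : ℕ) (f : ℝ × ℝ → ℝ) :
    ∑ᶠ p ∈ diamond k ∩ lat, f p = ∑ n ∈ Finset.range (k + 1), diamondRow k f n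
      + ∑ n ∈ Finset.range (k + 1), diamondRow k (reflect f) n - diamondRow k f 0 := by
  rw [finsum_mem_inter_lat_eq_sum_rows (intCast_mem_diamond_iff k) f, sum_Icc_neg_self]
  simp [diamondRow, rowSum, reflect]

theorem sum_pair_neg_self (g : ℤ → ℝ) {w : ℤ} (hw : 0 < w) :
    ∑ m ∈ ({-w, w} : Finset ℤ), g m = g w + g (-w) := by
  rw [Finset.sum_pair (by omega), add_comm]

theorem sum_range_boundary_rows (G : ℝ × ℝ → ℝ) (k : ℕ) :
    ∑ n ∈ Finset.range (k + 1),
        ∑ m ∈ ({-(2 * ((k : ℤ) - n)), 2 * ((k : ℤ) - n)} : Finset ℤ), G (m, n)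
      = ∑ n ∈ Finset.range (k + 1), pairSum G (2 * (k - n)) n - G (0, k) := by
  rw [Finset.sum_range_succ, Finset.sum_range_succ, Finset.sum_congr rfl fun n hn =>
    sum_pair_neg_self (fun m : ℤ => G (m, (n : ℕ))) (by rw [Finset.mem_range] at hn; omega)]
  simp only [Int.cast_mul, Int.cast_ofNat, Int.cast_sub, Int.cast_natCast, Int.cast_neg, sub_self,
    mul_zero, neg_zero, Finset.mem_singleton, Finset.insert_eq_of_mem, Finset.sum_singleton,
    Int.cast_zero, pairSum]
  ring

theorem finsum_frontier_diamond_inter_lat {k : ℕ} (hk : 0 < k) (f : ℝ × ℝ → ℝ) :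
    ∑ᶠ p ∈ frontier (diamond k) ∩ lat, f p
      = ∑ n ∈ Finset.range (k + 1), pairSum f (2 * (k - n)) n
        + ∑ n ∈ Finset.range (k + 1), pairSum (reflect f) (2 * (k - n)) n
        - pairSum f (2 * k) 0 - f (0, k) - f (0, -k) := by
  rw [finsum_mem_inter_lat_eq_sum_rows (intCast_mem_frontier_diamond_iff hk) f, sum_Icc_neg_self]
  simp only [Int.cast_natCast, Int.cast_neg, abs_neg, Nat.abs_cast, Int.cast_zero, abs_zero]
  have h := sum_range_boundary_rows (reflect f) k
  simp only [reflect] at h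
  rw [sum_range_boundary_rows, h, sum_pair_neg_self _ (by omega)]
  simp only [pairSum, sub_zero, Int.cast_mul, Int.cast_ofNat, Int.cast_natCast, Int.cast_neg]
  ring

theorem mem_diamond_iff_mem_Icc {K x y : ℝ} :
    (x, y) ∈ diamond K ↔ x ∈ Icc (-(2 * K - 2 * |y|)) (2 * K - 2 * |y|) := by
  rw [mem_diamond, mem_Icc, ← abs_le]
  constructor <;> intro h <;> linarith

def diamondSection (K : ℝ) (G : ℝ × ℝ → ℝ) (y : ℝ) : ℝ := ∫ x, (diamond K).indicator G (x, y)

theorem diamondSection_eq_setIntegral (K : ℝ) (G : ℝ × ℝ → ℝ) (y : ℝ) :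
    diamondSection K G y = ∫ x in Icc (-(2 * K - 2 * |y|)) (2 * K - 2 * |y|), G (x, y) := by
  rw [diamondSection, ← integral_indicator measurableSet_Icc]
  congr 1
  ext x
  by_cases hx : (x, y) ∈ diamond K
  · rw [indicator_of_mem hx, indicator_of_mem (mem_diamond_iff_mem_Icc.mp hx)]
  · rw [indicator_of_notMem hx, indicator_of_notMem (mt mem_diamond_iff_mem_Icc.mpr hx)]

theorem diamondSection_eq {K y : ℝ} (hy : |y| ≤ K) (G : ℝ × ℝ → ℝ) :
    diamondSection K G y = ∫ x in -(2 * K - 2 * |y|)..2 * K - 2 * |y|, G (x, y) := by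
  rw [diamondSection_eq_setIntegral, integral_Icc_eq_integral_Ioc,
    intervalIntegral.integral_of_le (by linarith)]

theorem diamondSection_eq_zero {K y : ℝ} (hy : K < |y|) (G : ℝ × ℝ → ℝ) :
    diamondSection K G y = 0 := by
  rw [diamondSection_eq_setIntegral, Icc_eq_empty (by linarith), Measure.restrict_empty,
    integral_zero_measure]

theorem diamondSection_reflect (K : ℝ) (G : ℝ × ℝ → ℝ) (y : ℝ) :
    diamondSection K (reflect G) y = diamondSection K G (-y) := by
  simp only [diamondSection_eq_setIntegral, abs_neg, reflect]

theorem integrable_indicator_diamond {K : ℝ} (hc : ContinuousOn G (diamond K)) :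
    Integrable ((diamond K).indicator G) ((volume : Measure ℝ).prod volume) :=
  (hc.integrableOn_compact (isCompact_diamond K)).integrable_indicator
    (isClosed_diamond K).measurableSet

theorem integrable_diamondSection {K : ℝ} (hc : ContinuousOn G (diamond K)) :
    Integrable (diamondSection K G) :=
  (integrable_indicator_diamond hc).integral_prod_right

theorem integral_diamond_eq_integral_diamondSection {K : ℝ} (hc : ContinuousOn G (diamond K)) :
    ∫ p in diamond K, G p = ∫ y, diamondSection K G y := by
  rw [← integral_indicator (isClosed_diamond K).measurableSet, Measure.volume_eq_prod,
    integral_prod_symm _ (integrable_indicator_diamond hc)]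
  rfl

theorem integral_diamond_eq_halves {K : ℝ} (hK : 0 ≤ K) (hc : ContinuousOn G (diamond K)) :
    ∫ p in diamond K, G p
      = (∫ y in 0..K, diamondSection K G y) + ∫ y in 0..K, diamondSection K (reflect G) y := by
  have hF := integrable_diamondSection hc
  rw [integral_diamond_eq_integral_diamondSection hc,
    ← setIntegral_eq_integral_of_forall_compl_eq_zero (s := Icc (-K) K) fun y hy =>
      diamondSection_eq_zero (not_le.mp (mt abs_le.mp hy)) G,
    integral_Icc_eq_integral_Ioc, ← intervalIntegral.integral_of_le (by linarith),
    ← intervalIntegral.integral_add_adjacent_intervals (b := 0) hF.intervalIntegrable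
      hF.intervalIntegrable, add_comm]
  simp_rw [diamondSection_reflect]
  rw [intervalIntegral.integral_comp_neg, neg_zero]

theorem sum_range_strip_weights (R E M C : ℕ → ℝ) (k : ℕ) :
    ∑ j ∈ Finset.range k,
        (3 * R j + 3 * R (j + 1) - 2 * E j - M j - C j - E (j + 1) + M (j + 1) + C (j + 1))
      = 6 * ∑ n ∈ Finset.range (k + 1), R n - 3 * R 0 - 3 * R k
        - 3 * ∑ n ∈ Finset.range (k + 1), E n + E 0 + 2 * E k - M 0 + M k - C 0 + C k := by
  induction k with
  | zero => simp only [Finset.range_zero, Finset.sum_empty, zero_add, Finset.range_one,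
      Finset.sum_singleton]; ring
  | succ k ih =>
    rw [Finset.sum_range_succ, ih, Finset.sum_range_succ _ (k + 1),
      Finset.sum_range_succ E (k + 1)]
    ring

theorem strip_rows_le_integral_diamondSection {k : ℕ} (hG : ConcaveOn ℝ (diamond k) G)
    (hc : ContinuousOn G (diamond k)) {j : ℕ} (hj : j < k) :
    (3 * diamondRow k G j + 3 * diamondRow k G (j + 1) - 2 * pairSum G (2 * (k - j)) j
      - pairSum G (k - j) j - G (0, j) - pairSum G (2 * (k - (j + 1 : ℕ))) (j + 1 : ℕ)
      + pairSum G (k - (j + 1 : ℕ)) (j + 1 : ℕ) + G (0, (j + 1 : ℕ))) / 6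
      ≤ ∫ y in (j : ℝ)..(j + 1 : ℕ), diamondSection k G y := by
  obtain ⟨m, rfl⟩ : ∃ m, k = j + m + 1 := ⟨k - j - 1, by omega⟩
  have hj0 : (0 : ℝ) ≤ j := j.cast_nonneg
  have hm0 : (0 : ℝ) ≤ m := m.cast_nonneg
  have key := integral_stripSum_le (convex_diamond _) hG hc (m := m) (y := j)
    (fun x hx => by
      rw [mem_diamond_iff_mem_Icc, abs_of_nonneg hj0]; push_cast
      exact ⟨by linarith [hx.1], by linarith [hx.2]⟩)
    (fun x hx => by
      rw [mem_diamond_iff_mem_Icc, abs_of_nonneg (by linarith)]; push_cast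
      exact ⟨by linarith [hx.1], by linarith [hx.2]⟩)
    (integrable_diamondSection hc).intervalIntegrable
    (fun t ht => by
      rw [diamondSection_eq
          (by rw [abs_of_nonneg (by linarith [ht.1])]; push_cast; linarith [ht.2]),
        abs_of_nonneg (by linarith [ht.1])]
      push_cast
      ring_nf
      exact le_rfl)
  rw [integral_stripSum] at key
  simp only [diamondRow]
  push_cast at key ⊢
  ring_nf at key ⊢
  linarith

theorem upper_half_rows_le_integral_diamondSection {k : ℕ} (hG : ConcaveOn ℝ (diamond k) G)
    (hc : ContinuousOn G (diamond k)) :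
    6 * ∑ n ∈ Finset.range (k + 1), diamondRow k G n - 3 * diamondRow k G 0
      - 3 * ∑ n ∈ Finset.range (k + 1), pairSum G (2 * (k - n)) n + pairSum G (2 * k) 0
      - pairSum G k 0 - G (0, 0) + 4 * G (0, k)
      ≤ 6 * ∫ y in (0 : ℝ)..k, diamondSection k G y := by
  have hstrips := Finset.sum_le_sum fun j hj =>
    strip_rows_le_integral_diamondSection hG hc (Finset.mem_range.mp hj)
  have hweights := sum_range_strip_weights (diamondRow k G) (fun n : ℕ => pairSum G (2 * (k - n)) n)
    (fun n : ℕ => pairSum G (k - n) n) (fun n : ℕ => G (0, n)) k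
  rw [← Finset.sum_div, hweights, intervalIntegral.sum_integral_adjacent_intervals
    (a := fun n : ℕ => (n : ℝ)) fun j _ => (integrable_diamondSection hc).intervalIntegrable]
    at hstrips
  have hRk : diamondRow k G k = G (0, k) := by simp [diamondRow, rowSum]
  simp only [hRk, pairSum, sub_self, mul_zero, neg_zero, Nat.cast_zero, sub_zero] at hstrips ⊢
  linarith

end SubdivisionX2

/-- Subdivision estimate for `kΔ₂`: for a continuous concave `g` on `kΔ₂`,
`Σ_{lattice} g − ∫_{kΔ₂} g ≤ (1/2) Σ_{boundary lattice} g − (1/6)(g(0,k)+g(0,-k))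
 + (1/6)(g(2k,0)+g(-2k,0)) + (1/3)(g(k,0)+g(-k,0)) + (1/3) g(0,0)`. -/
theorem subdivision_estimate_X2 (k : ℕ) (hk : 1 ≤ k) (g : ℝ × ℝ → ℝ)
    (hg : ContinuousOn g ((k : ℝ) • Δ₂)) (hconc : ConcaveOn ℝ ((k : ℝ) • Δ₂) g) :
    (∑ᶠ p ∈ ((k : ℝ) • Δ₂) ∩ lat, g p) - (∫ x in (k : ℝ) • Δ₂, g x) ≤
      (1 / 2) * (∑ᶠ p ∈ frontier ((k : ℝ) • Δ₂) ∩ lat, g p)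
        - (1 / 6) * (g ((0 : ℝ), (k : ℝ)) + g ((0 : ℝ), -(k : ℝ)))
        + (1 / 6) * (g ((2 * k : ℝ), (0 : ℝ)) + g ((-(2 * (k : ℝ))), (0 : ℝ)))
        + (1 / 3) * (g ((k : ℝ), (0 : ℝ)) + g ((-(k : ℝ)), (0 : ℝ)))
        + (1 / 3) * g ((0 : ℝ), (0 : ℝ)) := by
  open SubdivisionX2 in
  have hk0 : (0 : ℝ) < k := by exact_mod_cast hk
  rw [smul_Δ₂ hk0] at hg hconc ⊢
  have hup := upper_half_rows_le_integral_diamondSection hconc hg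
  have hdown := upper_half_rows_le_integral_diamondSection (concaveOn_reflect hconc)
    (continuousOn_reflect hg)
  rw [finsum_diamond_inter_lat, finsum_frontier_diamond_inter_lat hk,
    integral_diamond_eq_halves hk0.le hg]
  have hrow0 : diamondRow k (reflect g) 0 = diamondRow k g 0 := by
    simp [diamondRow, rowSum, reflect]
  simp only [pairSum, reflect, neg_zero, hrow0] at hup hdown ⊢
  linarith
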